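/- Let K be an algebraically closed field and let F = {f_1,…,f_m} ⊆ K[x_1,…,x_n] be a polynomial system such that (F) ≠ (1) and the ideal (F) is zero-dimensional. Then the homogenized ideal (F^h) is in generic coordinates if and only if the degree of regularity d_reg(F) is finite, i.e., if and only if there exists d ≥ 0 such that every homogeneous polynomial of degree d lies in the ideal (F^top). -/

import Mathlib

open MvPolynomial

/-! ### Term orders, initial ideals and Gröbner bases -/

/-- Total degree of an exponent vector. -/
def expDeg {σ : Type*} (a : σ →₀ ℕ) : ℕ := a.sum fun _ e => e

/-- Degree reverse lexicographic strict order on exponent vectors; `sig j i` reads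
"`j` is strictly less significant than `i`".  `a` is DRL-smaller than `b` iff its total degree
is smaller, or the degrees agree and at the least significant variable where they differ the
exponent of `a` is larger. -/
def drlLT {σ : Type*} (sig : σ → σ → Prop) (a b : σ →₀ ℕ) : Prop :=
  expDeg a < expDeg b ∨
    (expDeg a = expDeg b ∧ ∃ i, b i < a i ∧ ∀ j, sig j i → a j = b j)

/-- Lexicographic strict order on exponent vectors; `sig i j` reads "`i` is strictly less
significant than `j`".  `a` is LEX-smaller than `b` iff at the most significant variable where
they differ the exponent of `a` is smaller. -/
def lexLT {σ : Type*} (sig : σ → σ → Prop) (a b : σ →₀ ℕ) : Prop :=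
  ∃ i, a i < b i ∧ ∀ j, sig i j → a j = b j

/-- Significance relation on `Fin N` for which the variable significance is strictly
decreasing in the index (`x_0 > x_1 > ⋯`):  `sigDes i j` iff `i` is less significant
than `j`, i.e. `j < i`. -/
def sigDes {N : ℕ} (i j : Fin N) : Prop := j < i

/-- Significance relation on `Fin (N+1)` for a homogenized polynomial ring: the homogenization
variable `x_0` (index `0`) is the least significant variable, and among the remaining variables
the significance is strictly decreasing in the index. -/
def sigH {N : ℕ} (i j : Fin (N + 1)) : Prop := j ≠ 0 ∧ (i = 0 ∨ j < i)

/-- `a` is the leading monomial (exponent vector) of `f` w.r.t. the strict term order `lt`. -/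
def IsLeadMono {σ K : Type*} [CommSemiring K] (lt : (σ →₀ ℕ) → (σ →₀ ℕ) → Prop)
    (f : MvPolynomial σ K) (a : σ →₀ ℕ) : Prop :=
  a ∈ f.support ∧ ∀ b ∈ f.support, b ≠ a → lt b a

/-- The initial ideal of `I` w.r.t. the strict term order `lt`: the ideal generated by the
leading monomials of the nonzero elements of `I`. -/
noncomputable def initialIdeal {σ K : Type*} [CommSemiring K]
    (lt : (σ →₀ ℕ) → (σ →₀ ℕ) → Prop) (I : Ideal (MvPolynomial σ K)) :
    Ideal (MvPolynomial σ K) :=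
  Ideal.span {mf | ∃ f ∈ I, f ≠ 0 ∧ ∃ a, IsLeadMono lt f a ∧ mf = monomial a (1 : K)}

/-- `G` is a Gröbner basis of `I` w.r.t. the strict term order `lt`: `G ⊆ I` and the leading
monomials of the elements of `G` generate the initial ideal of `I`. -/
def IsGroebner {σ K : Type*} [CommSemiring K] (lt : (σ →₀ ℕ) → (σ →₀ ℕ) → Prop)
    (G : Set (MvPolynomial σ K)) (I : Ideal (MvPolynomial σ K)) : Prop :=
  G ⊆ (I : Set (MvPolynomial σ K)) ∧
    Ideal.span {mf | ∃ g ∈ G, g ≠ 0 ∧ ∃ a, IsLeadMono lt g a ∧ mf = monomial a (1 : K)}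
      = initialIdeal lt I

/-! ### Saturation, projective zero loci, generic coordinates, homogenization -/

/-- The saturation `I : (x_0, …, x_n)^∞ = ⋃_k (I : (x_0, …, x_n)^k)` of an ideal of a
polynomial ring with respect to the maximal ideal generated by all the variables. -/
noncomputable def maxSat {K : Type*} [Field K] {σ : Type*}
    (I : Ideal (MvPolynomial σ K)) : Ideal (MvPolynomial σ K) :=
  ⨆ k : ℕ, Submodule.colon I (((Ideal.span (Set.range (X : σ → MvPolynomial σ K))) ^ k : Ideal (MvPolynomial σ K)) : Set (MvPolynomial σ K))

/-- The projective zero locus of `I` over the algebraic closure of `K`. -/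
noncomputable def projZerosBar {K : Type*} [Field K] {σ : Type*}
    (I : Ideal (MvPolynomial σ K)) :
    Set (Projectivization (AlgebraicClosure K) (σ → AlgebraicClosure K)) :=
  {x | ∀ f ∈ I, eval x.rep (map (algebraMap K (AlgebraicClosure K)) f) = 0}

/-- `I` is in generic coordinates (w.r.t. the homogenization variable `v0`): its projective zero
locus over the algebraic closure is finite, and either it is empty or `X v0` is a nonzerodivisor
modulo the saturation `I^sat`. -/
def GenCoords {K : Type*} [Field K] {σ : Type*} (v0 : σ)
    (I : Ideal (MvPolynomial σ K)) : Prop :=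
  (projZerosBar I).Finite ∧
    (projZerosBar I = ∅ ∨ ∀ f, X v0 * f ∈ maxSat I → f ∈ maxSat I)

/-- Homogenization of `f` with respect to a new variable `x_0` placed at index `0`; the original
variables are shifted along `Fin.succ`. -/
noncomputable def homogPoly {K : Type*} [CommSemiring K] {q : ℕ}
    (f : MvPolynomial (Fin q) K) : MvPolynomial (Fin (q + 1)) K :=
  f.support.sum fun a =>
    monomial (Finsupp.single (0 : Fin (q + 1)) (f.totalDegree - expDeg a)
      + a.mapDomain Fin.succ) (f.coeff a)

/-- Dehomogenization: substitute `x_0 ↦ 1` and shift the remaining variables back. -/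
noncomputable def dehomAlg {K : Type*} [Field K] (n : ℕ) :
    MvPolynomial (Fin (n + 1)) K →ₐ[K] MvPolynomial (Fin n) K :=
  aeval fun i => Fin.cases (1 : MvPolynomial (Fin n) K) (fun j => X j) i

/-- An ideal of a polynomial ring is homogeneous if it contains all homogeneous components of
its elements. -/
def IsHomogIdeal {σ K : Type*} [CommSemiring K] (I : Ideal (MvPolynomial σ K)) : Prop :=
  ∀ f ∈ I, ∀ d : ℕ, MvPolynomial.homogeneousComponent d f ∈ I

/-- The highest degree homogeneous component `f^top` of a polynomial. -/
noncomputable def topComp {σ K : Type*} [CommSemiring K] (f : MvPolynomial σ K) :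
    MvPolynomial σ K :=
  MvPolynomial.homogeneousComponent f.totalDegree f

/-! ### Keyed iterated polynomial systems -/

open Fin.NatCast in
/-- The univariate keyed iterated polynomial system attached to the bivariate polynomials
`g_1, …, g_n` (with `n = m + 1`, indexed here by `k = 0, …, m`), the plaintext `p` and the
ciphertext `c`.  The ambient ring is `K[x_1, …, x_m, y]`, where `x_j` has variable index
`j - 1` and `y` has variable index `m`; in the bivariate ring `K[x, y]`, `x` has index `0`
and `y` has index `1`.  Explicitly, `keyedF m g p c 0 = g 1 (p, y) - x 1`,
`keyedF m g p c k = g (k+1) (x k, y) - x (k+1)` for `1 ≤ k ≤ m - 1` and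
`keyedF m g p c m = g (m+1) (x m, y) - c`. -/
noncomputable def keyedF {K : Type*} [Field K] (m : ℕ)
    (g : ℕ → MvPolynomial (Fin 2) K) (p c : K) (k : ℕ) :
    MvPolynomial (Fin (m + 1)) K :=
  aeval ![if k = 0 then C p else X (((k - 1 : ℕ)) : Fin (m + 1)),
          X ((m : ℕ) : Fin (m + 1))] (g k)
    - (if k < m then X ((k : ℕ) : Fin (m + 1)) else C c)

/-- The chain `ĝ_1 = g_1(p, y)`, `ĝ_{k+1} = g_{k+1}(ĝ_k(y), y)` of univariate polynomials
(0-based indexing: `ghat g p k = ĝ_{k+1}`). -/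
noncomputable def ghat {K : Type*} [Field K] (g : ℕ → MvPolynomial (Fin 2) K)
    (p : K) : ℕ → Polynomial K
  | 0 => aeval ![Polynomial.C p, Polynomial.X] (g 0)
  | (k + 1) => aeval ![ghat g p k, Polynomial.X] (g (k + 1))

open Fin.NatCast in
/-- Embed a univariate polynomial into `K[x_1, …, x_m, y]` via the variable `y`. -/
noncomputable def yPoly {K : Type*} [Field K] (m : ℕ) (q : Polynomial K) :
    MvPolynomial (Fin (m + 1)) K :=
  Polynomial.aeval (X ((m : ℕ) : Fin (m + 1))) q

/-- The (monic, up to a unit) greatest common divisor of two univariate polynomials over a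
field. -/
noncomputable def polyGCD {K : Type*} [Field K] (f g : Polynomial K) : Polynomial K :=
  @EuclideanDomain.gcd _ _ (Classical.decEq _) f g

/-- The number of distinct roots of a univariate polynomial in the base field. -/
noncomputable def numRoots {K : Type*} [Field K] (f : Polynomial K) : ℕ :=
  letI := Classical.decEq K
  f.roots.toFinset.card

/-! ### Feistel-2n/n keyed iterated polynomial systems -/

open Fin.NatCast in
/-- The nonlinear ("left branch") polynomials of the keyed iterated polynomial system for
Feistel-`2n/n` (with `n = m + 1`, indexed here by `k = 0, …, m`).  The ambient ring is
`K[x_{L,1}, x_{R,1}, …, x_{L,m}, x_{R,m}, y]` where `x_{L,j}` has variable index `2(j-1)`,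
`x_{R,j}` has variable index `2(j-1) + 1` and `y` has variable index `2m`. -/
noncomputable def fstL {K : Type*} [Field K] (m : ℕ) (g : ℕ → MvPolynomial (Fin 2) K)
    (pL pR cL : K) (k : ℕ) : MvPolynomial (Fin (2 * m + 1)) K :=
  (if k = 0 then C pR else X (((2 * (k - 1) + 1 : ℕ)) : Fin (2 * m + 1)))
  + aeval ![if k = 0 then C pL else X (((2 * (k - 1) : ℕ)) : Fin (2 * m + 1)),
            X (((2 * m : ℕ)) : Fin (2 * m + 1))] (g k)
  - (if k < m then X (((2 * k : ℕ)) : Fin (2 * m + 1)) else C cL)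

open Fin.NatCast in
/-- The linear ("right branch") polynomials of the keyed iterated polynomial system for
Feistel-`2n/n` (same variable conventions as in `fstL`). -/
noncomputable def fstR {K : Type*} [Field K] (m : ℕ) (pL cR : K) (k : ℕ) :
    MvPolynomial (Fin (2 * m + 1)) K :=
  (if k = 0 then C pL else X (((2 * (k - 1) : ℕ)) : Fin (2 * m + 1)))
  - (if k < m then X (((2 * k + 1 : ℕ)) : Fin (2 * m + 1)) else C cR)

open Fin.NatCast in
/-- The downsized Feistel system `H = {f̃_1, …, f̃_n}` (with `n = m + 1`, indexed here by
`k = 0, …, m`), obtained by substituting the linear polynomials into the nonlinear ones.  The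
ambient ring is `K[x_{R,2}, …, x_{R,m}, x_{L,m}, y]` where `x_{R,j}` has variable index
`j - 2`, `x_{L,m}` has variable index `m - 1` and `y` has variable index `m`. -/
noncomputable def hTil {K : Type*} [Field K] (m : ℕ) (g : ℕ → MvPolynomial (Fin 2) K)
    (pL pR cL : K) (k : ℕ) : MvPolynomial (Fin (m + 1)) K :=
  (if k = 0 then C pR else if k = 1 then C pL else X (((k - 2 : ℕ)) : Fin (m + 1)))
  + aeval ![if k = 0 then C pL else X (((k - 1 : ℕ)) : Fin (m + 1)),
            X ((m : ℕ) : Fin (m + 1))] (g k)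
  - (if k < m then X ((k : ℕ) : Fin (m + 1)) else C cL)

/-- The chain `ĥ_1 = p_R + g_1(p_L, y)`, `ĥ_2 = p_L + g_2(ĥ_1, y)`,
`ĥ_i = ĥ_{i-2} + g_i(ĥ_{i-1}, y)` of univariate polynomials (0-based indexing:
`hHat g pL pR k = ĥ_{k+1}`). -/
noncomputable def hHat {K : Type*} [Field K] (g : ℕ → MvPolynomial (Fin 2) K)
    (pL pR : K) : ℕ → Polynomial K
  | 0 => Polynomial.C pR + aeval ![Polynomial.C pL, Polynomial.X] (g 0)
  | 1 => Polynomial.C pL + aeval ![hHat g pL pR 0, Polynomial.X] (g 1)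
  | (k + 2) => hHat g pL pR k + aeval ![hHat g pL pR (k + 1), Polynomial.X] (g (k + 2))

/-! ### Two plain/ciphertext systems -/

open Fin.NatCast in
/-- A univariate keyed iterated polynomial system placed inside the ring
`K[u_1, …, u_m, v_1, …, v_m, y]` (`u_j` has index `j - 1`, `v_j` has index `m + j - 1`, `y` has
index `2m`), with the state variables offset by `off` (so `off = 0` uses the `u`-variables and
`off = m` the `v`-variables). -/
noncomputable def twoF {K : Type*} [Field K] (m : ℕ) (g : ℕ → MvPolynomial (Fin 2) K)
    (p c : K) (off : ℕ) (k : ℕ) : MvPolynomial (Fin (2 * m + 1)) K :=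
  aeval ![if k = 0 then C p else X (((off + (k - 1) : ℕ)) : Fin (2 * m + 1)),
          X (((2 * m : ℕ)) : Fin (2 * m + 1))] (g k)
  - (if k < m then X (((off + k : ℕ)) : Fin (2 * m + 1)) else C c)

/-! ### Macaulay spaces, degree falls, last fall degree, satiety, degree of regularity -/

/-- The row space `W_{F,d}` of the degree-`d` inhomogeneous Macaulay matrix of the system `F`:
all polynomials of the form `∑ gᵢ·fᵢ` with `deg (gᵢ·fᵢ) ≤ d` for every `i`. -/
def Wsp {σ K ι : Type*} [CommSemiring K] [Fintype ι]
    (F : ι → MvPolynomial σ K) (d : ℕ) : Set (MvPolynomial σ K) :=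
  {f | ∃ g : ι → MvPolynomial σ K, f = ∑ i, g i * F i ∧ ∀ i, (g i * F i).totalDegree ≤ d}

/-- `d_f`: the least degree `d` with `f ∈ W_{F,d}`. -/
noncomputable def dfall {σ K ι : Type*} [CommSemiring K] [Fintype ι]
    (F : ι → MvPolynomial σ K) (f : MvPolynomial σ K) : ℕ :=
  sInf {d : ℕ | f ∈ Wsp F d}

/-- The last fall degree `d_F ∈ ℕ ∪ {∞}`: the least `d` such that every `f` in the ideal
generated by `F` lies in `W_{F, max (d, deg f)}` (the value `∞` imposes no condition since
`W_{F,∞} = (F)`). -/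
noncomputable def lastFall {σ K ι : Type*} [CommSemiring K] [Fintype ι]
    (F : ι → MvPolynomial σ K) : ℕ∞ :=
  sInf {d : ℕ∞ | ∀ e : ℕ, d = (e : ℕ∞) →
    ∀ f ∈ Ideal.span (Set.range F), f ∈ Wsp F (max e f.totalDegree)}

/-- The satiety of a homogeneous ideal: the least `s` such that `I` and `I^sat` agree in all
degrees `l ≥ s`. -/
noncomputable def satiety {σ K : Type*} [Field K] (I : Ideal (MvPolynomial σ K)) : ℕ :=
  sInf {s : ℕ | ∀ l, s ≤ l → ∀ f : MvPolynomial σ K, f.IsHomogeneous l →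
    (f ∈ I ↔ f ∈ maxSat I)}

/-- The degree of regularity `d_reg(F) ∈ ℕ ∪ {∞}` of a polynomial system: the least `d` such
that every homogeneous polynomial of degree `d` lies in the ideal generated by the highest
degree components `F^top`. -/
noncomputable def dregSys {σ K : Type*} [CommSemiring K] (F : Set (MvPolynomial σ K)) : ℕ∞ :=
  sInf {e : ℕ∞ | ∃ d : ℕ, e = (d : ℕ∞) ∧ ∀ f : MvPolynomial σ K, f.IsHomogeneous d →
    f ∈ Ideal.span (topComp '' F)}


/-!
Write `I = (F^h)` and `J = (F^top)`. Setting `x_0 = 0` in `F^h` gives `F^top`, so the projective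
zeros of `I` on the hyperplane `x_0 = 0` are the nonzero zeros of `J`, and by the Nullstellensatz
`J` has no nonzero zero iff it contains all forms of some degree `d`.

If such a `d` exists, every projective zero of `I` lies in the chart `x_0 ≠ 0`, where it
dehomogenizes to one of the finitely many zeros of `(F)`; and `(x_0, …, x_n)^d ⊆ I + (x_0)` gives
`(x_0, …, x_n)^(d(k+1)) ⊆ I + (x_0^(k+1))`, which makes `x_0` a nonzerodivisor modulo `I^sat`.

Conversely, let `p` be a projective zero on `x_0 = 0`. A product `f` of linear forms vanishing at
the finitely many other zeros but not at `p` makes `x_0 f` vanish on the zero set of `I`, so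
`(x_0 f)^N ∈ I`. Since `x_0` is a nonzerodivisor modulo `I^sat`, `f^N ∈ I^sat`; but every element
of `I^sat` vanishes at `p`.
-/

namespace MvPolynomial

variable {σ K A : Type*} [CommSemiring K] [CommSemiring A] [Algebra K A]

theorem IsHomogeneous.aeval_smul {p : MvPolynomial σ K} {D : ℕ} (hp : p.IsHomogeneous D)
    (c : A) (v : σ → A) :
    MvPolynomial.aeval (c • v) p = c ^ D * MvPolynomial.aeval v p := by
  conv_lhs => rw [p.as_sum]
  conv_rhs => rw [p.as_sum]
  simp only [map_sum, aeval_monomial, Finset.mul_sum]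
  refine Finset.sum_congr rfl fun a ha => ?_
  simp only [Pi.smul_apply, smul_eq_mul, mul_pow, Finsupp.prod_mul]
  rw [Finsupp.prod, Finset.prod_pow_eq_pow_sum, ← hp.degree_eq_sum_deg_support ha]
  ring

theorem IsHomogeneous.mem_of_X_pow_mem [Fintype σ] {J : Ideal (MvPolynomial σ K)} {k : σ → ℕ}
    (hk : ∀ i, X i ^ k i ∈ J) {f : MvPolynomial σ K} (hf : f.IsHomogeneous (∑ i, k i + 1)) :
    f ∈ J := by
  have hspan : Ideal.span ((monomial · (1 : K)) '' Set.range fun i => Finsupp.single i (k i)) ≤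
      J := by
    rw [Ideal.span_le]
    rintro _ ⟨_, ⟨i, rfl⟩, rfl⟩
    simpa [X_pow_eq_monomial] using hk i
  refine hspan (mem_ideal_span_monomial_image.2 fun a ha => ?_)
  have hdeg : ∑ i, k i < ∑ i, a i := by
    have := hf.degree_eq_sum_deg_support ha
    rw [← Finsupp.degree_apply, Finsupp.degree_eq_sum] at this
    omega
  obtain ⟨i, -, hi⟩ := Finset.exists_lt_of_sum_lt hdeg
  exact ⟨_, ⟨i, rfl⟩, Finsupp.single_le_iff.2 hi.le⟩

end MvPolynomial

theorem expDeg_eq_degree {σ : Type*} (a : σ →₀ ℕ) : expDeg a = a.degree := rfl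

section Homogenization

variable {K A : Type*} [CommSemiring K] [CommSemiring A] [Algebra K A] {q : ℕ}

theorem isHomogeneous_homogPoly (f : MvPolynomial (Fin q) K) :
    (homogPoly f).IsHomogeneous f.totalDegree := by
  refine IsHomogeneous.sum _ _ _ fun a ha => isHomogeneous_monomial _ ?_
  change (Finsupp.single 0 _ + a.mapDomain Fin.succ).degree = _
  rw [map_add, Finsupp.degree_single, Finsupp.degree_mapDomain, expDeg_eq_degree]
  exact Nat.sub_add_cancel (le_totalDegree ha)

theorem aeval_cons_homogPoly (f : MvPolynomial (Fin q) K) (x : A) (w : Fin q → A) :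
    aeval (Fin.cons x w : Fin (q + 1) → A) (homogPoly f) =
      ∑ a ∈ f.support, x ^ (f.totalDegree - a.degree) * aeval w (monomial a (f.coeff a)) := by
  rw [homogPoly, map_sum]
  refine Finset.sum_congr rfl fun a _ => ?_
  rw [aeval_monomial, aeval_monomial,
    Finsupp.prod_add_index' (fun _ => pow_zero _) (fun _ _ _ => pow_add _ _ _),
    Finsupp.prod_mapDomain_index_inj (Fin.succ_injective _)]
  simp only [Finsupp.prod_single_index, pow_zero, Fin.cons_zero, Fin.cons_succ, expDeg_eq_degree]
  ring

theorem aeval_cons_one_homogPoly (f : MvPolynomial (Fin q) K) (w : Fin q → A) :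
    aeval (Fin.cons 1 w : Fin (q + 1) → A) (homogPoly f) = aeval w f := by
  conv_rhs => rw [f.as_sum]
  simp only [aeval_cons_homogPoly, one_pow, one_mul, map_sum]

theorem aeval_cons_zero_homogPoly (f : MvPolynomial (Fin q) K) (w : Fin q → A) :
    aeval (Fin.cons 0 w : Fin (q + 1) → A) (homogPoly f) = aeval w (topComp f) := by
  rw [aeval_cons_homogPoly, topComp, homogeneousComponent_apply, map_sum, Finset.sum_filter]
  refine Finset.sum_congr rfl fun a ha => ?_
  split_ifs with h
  · rw [h, Nat.sub_self, pow_zero, one_mul]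
  · have : a.degree ≤ f.totalDegree := le_totalDegree ha
    rw [zero_pow (by omega), zero_mul]

end Homogenization

section HyperplaneAtInfinity

variable {K : Type*} [CommRing K] {q : ℕ}

theorem sub_rename_aeval_cons_zero_mem (p : MvPolynomial (Fin (q + 1)) K) :
    p - rename Fin.succ (aeval (Fin.cons 0 X : Fin (q + 1) → MvPolynomial (Fin q) K) p) ∈
      Ideal.span {X 0} := by
  rw [← Ideal.Quotient.eq]
  have : Ideal.Quotient.mkₐ K (Ideal.span {(X 0 : MvPolynomial (Fin (q + 1)) K)}) =
      (Ideal.Quotient.mkₐ K _).comp ((rename Fin.succ).comp (aeval (Fin.cons 0 X))) := by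
    ext i
    cases i using Fin.cases with
    | zero => simp
    | succ i => simp
  exact congr($this p)

theorem homogPoly_sub_rename_topComp_mem (f : MvPolynomial (Fin q) K) :
    homogPoly f - rename Fin.succ (topComp f) ∈ Ideal.span {X 0} := by
  have := sub_rename_aeval_cons_zero_mem (homogPoly f)
  rwa [aeval_cons_zero_homogPoly, aeval_X_left_apply] at this

end HyperplaneAtInfinity

section Saturation

variable {σ K : Type*} [Field K] {I : Ideal (MvPolynomial σ K)}

theorem mem_maxSat {f : MvPolynomial σ K} :
    f ∈ maxSat I ↔ ∃ k : ℕ, ∀ g ∈ idealOfVars σ K ^ k, f * g ∈ I := by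
  rw [maxSat, Submodule.mem_iSup_of_directed]
  · simp only [Submodule.mem_colon, smul_eq_mul, SetLike.mem_coe]
  · exact Monotone.directed_le fun k l hkl =>
      Submodule.colon_mono le_rfl (Ideal.pow_le_pow_right hkl)

theorem le_maxSat : I ≤ maxSat I :=
  fun _ hf => mem_maxSat.2 ⟨0, fun g _ => I.mul_mem_right g hf⟩

theorem mem_maxSat_of_X_mul_mem {v₀ : σ} {d : ℕ}
    (hd : idealOfVars σ K ^ d ≤ I ⊔ Ideal.span {X v₀}) {f : MvPolynomial σ K}
    (hf : X v₀ * f ∈ maxSat I) : f ∈ maxSat I := by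
  obtain ⟨k, hk⟩ := mem_maxSat.1 hf
  refine mem_maxSat.2 ⟨d * (1 + (k + 1)), fun g hg => ?_⟩
  have hg' : g ∈ I ⊔ Ideal.span {X v₀ ^ (k + 1)} := by
    rw [pow_mul] at hg
    have := (Ideal.pow_right_mono hd _).trans Ideal.sup_pow_add_le_pow_sup_pow hg
    rwa [pow_one, Ideal.span_singleton_pow] at this
  obtain ⟨y, hy, z, hz, rfl⟩ := Submodule.mem_sup.1 hg'
  obtain ⟨r, rfl⟩ := Ideal.mem_span_singleton'.1 hz
  have hXk : X v₀ ^ k * r ∈ idealOfVars σ K ^ k :=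
    Ideal.mul_mem_right r _ (Ideal.pow_mem_pow (Ideal.subset_span (Set.mem_range_self v₀)) k)
  have hsplit : f * (y + r * X v₀ ^ (k + 1)) = f * y + X v₀ * f * (X v₀ ^ k * r) := by ring
  rw [hsplit]
  exact I.add_mem (I.mul_mem_left f hy) (hk _ hXk)

theorem mem_zeroLocus_maxSat {L : Type*} [Field L] [Algebra K L] {v : σ → L}
    (hv : v ∈ zeroLocus L I) (hv₀ : v ≠ 0) : v ∈ zeroLocus L (maxSat I) := by
  intro g hg
  obtain ⟨k, hk⟩ := mem_maxSat.1 hg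
  obtain ⟨j, hj⟩ := Function.ne_iff.1 hv₀
  have := hv _ (hk _ (Ideal.pow_mem_pow (Ideal.subset_span (Set.mem_range_self j)) k))
  rw [map_mul, map_pow, aeval_X] at this
  exact (mul_eq_zero.1 this).resolve_right (pow_ne_zero _ hj)

end Saturation

section ZeroLocus

variable {σ K L : Type*} [Field K] [Field L] [Algebra K L]

theorem zeroLocus_subset_zero_iff [IsAlgClosed L] [Finite σ] {J : Ideal (MvPolynomial σ K)} :
    zeroLocus L J ⊆ {0} ↔ ∃ d : ℕ, ∀ f : MvPolynomial σ K, f.IsHomogeneous d → f ∈ J := by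
  cases nonempty_fintype σ
  constructor
  · intro hJ
    have hX : ∀ i, X i ∈ J.radical := fun i => by
      rw [← vanishingIdeal_zeroLocus_eq_radical (K := L)]
      intro w hw
      simp [Set.mem_singleton_iff.1 (hJ hw)]
    choose k hk using hX
    exact ⟨_, fun f hf => hf.mem_of_X_pow_mem hk⟩
  · rintro ⟨d, hd⟩ w hw
    funext i
    have := hw _ (hd (X i ^ d) (by simpa using (isHomogeneous_X K i).pow d))
    rw [map_pow, aeval_X] at this
    exact eq_zero_of_pow_eq_zero this

theorem finite_zeroLocus_of_ringKrullDim_nonpos [Finite σ]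
    (hKL : Function.Surjective (algebraMap K L)) {J : Ideal (MvPolynomial σ K)}
    (hJ : ringKrullDim (MvPolynomial σ K ⧸ J) ≤ 0) : (zeroLocus L J).Finite := by
  have : Ring.KrullDimLE 0 (MvPolynomial σ K ⧸ J) := Ring.krullDimLE_iff.2 (by simpa using hJ)
  have := IsNoetherianRing.isArtinianRing_of_krullDimLE_zero (R := MvPolynomial σ K ⧸ J)
  let P : (σ → L) → PrimeSpectrum (MvPolynomial σ K) :=
    fun x => ⟨vanishingIdeal K {x}, inferInstance⟩
  refine Set.Finite.of_finite_image (f := P) ?_ fun x _ y _ hxy => funext fun i => ?_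
  · have := Set.finite_range (PrimeSpectrum.comap (Ideal.Quotient.mk J))
    rw [range_comap_of_surjective _ _ Ideal.Quotient.mk_surjective, Ideal.mk_ker] at this
    refine this.subset ?_
    rintro _ ⟨x, hx, rfl⟩ p hp
    exact (mem_vanishingIdeal_singleton_iff x p).2 (hx p hp)
  · obtain ⟨c, hc⟩ := hKL (x i)
    have hmem : X i - C c ∈ vanishingIdeal K {x} := by simp [hc]
    rw [show vanishingIdeal K {x} = vanishingIdeal K {y} from congrArg PrimeSpectrum.asIdeal hxy,
      mem_vanishingIdeal_singleton_iff] at hmem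
    simpa [hc, sub_eq_zero, eq_comm] using hmem

end ZeroLocus

section ProjectiveZeros

open Projectivization

variable {σ K : Type*} [Field K] {S : Set (MvPolynomial σ K)}

theorem smul_mem_zeroLocus_span {L : Type*} [Field L] [Algebra K L]
    (hS : ∀ g ∈ S, ∃ D, g.IsHomogeneous D) {v : σ → L} (hv : v ∈ zeroLocus L (Ideal.span S))
    (c : L) : c • v ∈ zeroLocus L (Ideal.span S) := by
  rw [zeroLocus_span] at hv ⊢
  intro g hg
  obtain ⟨D, hD⟩ := hS g hg
  rw [hD.aeval_smul, hv g hg, mul_zero]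

theorem exists_isHomogeneous_one_separating {L : Type*} [Field L] [Algebra K L]
    (hKL : Function.Surjective (algebraMap K L)) {u v : σ → L} (hu : u ≠ 0) (hv : v ≠ 0)
    (huv : mk L u hu ≠ mk L v hv) :
    ∃ ℓ : MvPolynomial σ K, ℓ.IsHomogeneous 1 ∧ aeval u ℓ = 0 ∧ aeval v ℓ ≠ 0 := by
  obtain ⟨i, hi⟩ := Function.ne_iff.1 hu
  choose c hc using hKL
  by_contra! h
  have hprop : ∀ j, v j * u i = u j * v i := fun j => by
    have := h (C (c (u i)) * X j - C (c (u j)) * X i)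
      (((isHomogeneous_X K j).C_mul _).sub ((isHomogeneous_X K i).C_mul _))
      (by simp only [map_sub, map_mul, aeval_C, aeval_X, hc]; ring)
    simp only [map_sub, map_mul, aeval_C, aeval_X, hc] at this
    linear_combination this
  refine huv ((mk_eq_mk_iff' L v u hv hu).2 ⟨v i / u i, funext fun j => ?_⟩).symm
  rw [Pi.smul_apply, smul_eq_mul, div_mul_eq_mul_div, div_eq_iff hi]
  linear_combination (hprop j).symm

end ProjectiveZeros

section ProjZerosBar

open Projectivization

variable {σ K : Type*} [Field K] {S : Set (MvPolynomial σ K)}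

local notation "K̄" => AlgebraicClosure K

theorem mem_projZerosBar_iff {I : Ideal (MvPolynomial σ K)} {x : Projectivization K̄ (σ → K̄)} :
    x ∈ projZerosBar I ↔ x.rep ∈ zeroLocus K̄ I := by
  simp only [projZerosBar, Set.mem_ofPred_eq, mem_zeroLocus_iff, eval_map, aeval_def]

theorem mk_mem_projZerosBar_span_iff (hS : ∀ g ∈ S, ∃ D, g.IsHomogeneous D) {v : σ → K̄}
    (hv : v ≠ 0) : mk K̄ v hv ∈ projZerosBar (Ideal.span S) ↔ v ∈ zeroLocus K̄ (Ideal.span S) := by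
  obtain ⟨a, ha⟩ := exists_smul_eq_mk_rep K̄ v hv
  rw [mem_projZerosBar_iff, ← ha, Units.smul_def]
  refine ⟨fun h => ?_, fun h => smul_mem_zeroLocus_span hS h _⟩
  have := smul_mem_zeroLocus_span hS h ((a⁻¹ : K̄ˣ) : K̄)
  rwa [smul_smul, Units.inv_mul, one_smul] at this

theorem exists_separating_of_finite_projZerosBar [IsAlgClosed K]
    (hS : ∀ g ∈ S, ∃ D, g.IsHomogeneous D) (hfin : (projZerosBar (Ideal.span S)).Finite)
    {v : σ → K̄} (hv₀ : v ≠ 0) :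
    ∃ f : MvPolynomial σ K, aeval v f ≠ 0 ∧ ∀ u ∈ zeroLocus K̄ (Ideal.span S), ∀ hu : u ≠ 0,
      mk K̄ u hu ≠ mk K̄ v hv₀ → aeval u f = 0 := by
  classical
  set T := hfin.toFinset.erase (mk K̄ v hv₀)
  have hsep : ∀ t ∈ T, ∃ ℓ : MvPolynomial σ K,
      ℓ.IsHomogeneous 1 ∧ aeval t.rep ℓ = 0 ∧ aeval v ℓ ≠ 0 := fun t ht =>
    exists_isHomogeneous_one_separating IsAlgClosed.algebraMap_bijective_of_isIntegral.2
      t.rep_nonzero hv₀ (by rw [mk_rep]; exact (Finset.mem_erase.1 ht).1)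
  choose ℓ hℓ hℓt hℓv using hsep
  refine ⟨∏ t ∈ T.attach, ℓ t t.2, ?_, fun u hu hu₀ hne => ?_⟩
  · rw [map_prod]
    exact Finset.prod_ne_zero_iff.2 fun t _ => hℓv t t.2
  have hT : mk K̄ u hu₀ ∈ T :=
    Finset.mem_erase.2 ⟨hne, hfin.mem_toFinset.2 ((mk_mem_projZerosBar_span_iff hS hu₀).2 hu)⟩
  obtain ⟨a, ha⟩ := exists_smul_eq_mk_rep K̄ u hu₀
  rw [map_prod]
  refine Finset.prod_eq_zero (Finset.mem_attach _ ⟨_, hT⟩) ?_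
  have := hℓt _ hT
  rw [← ha, Units.smul_def, (hℓ _ hT).aeval_smul, pow_one] at this
  exact (mul_eq_zero.1 this).resolve_left a.ne_zero

theorem GenCoords.apply_ne_zero [Finite σ] [IsAlgClosed K]
    (hS : ∀ g ∈ S, ∃ D, g.IsHomogeneous D) {v₀ : σ} (h : GenCoords v₀ (Ideal.span S))
    {v : σ → K̄} (hv : v ∈ zeroLocus K̄ (Ideal.span S)) (hv₀ : v ≠ 0) : v v₀ ≠ 0 := by
  obtain ⟨hfin, hnzd⟩ := h
  have hx := (mk_mem_projZerosBar_span_iff hS hv₀).2 hv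
  replace hnzd := hnzd.resolve_left (Set.nonempty_of_mem hx).ne_empty
  have hstrip : ∀ N g, X v₀ ^ N * g ∈ maxSat (Ideal.span S) → g ∈ maxSat (Ideal.span S) := by
    intro N
    induction N with
    | zero => simp
    | succ N ih => exact fun g hg => ih g (hnzd _ (by rwa [pow_succ', mul_assoc] at hg))
  intro hvv₀
  obtain ⟨f, hfv, hf⟩ := exists_separating_of_finite_projZerosBar hS hfin hv₀
  have hrad : X v₀ * f ∈ (Ideal.span S).radical := by
    rw [← vanishingIdeal_zeroLocus_eq_radical (K := K̄)]
    intro u hu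
    by_cases hu₀ : u = 0
    · simp [hu₀]
    by_cases hne : mk K̄ u hu₀ = mk K̄ v hv₀
    · obtain ⟨a, rfl⟩ := (mk_eq_mk_iff K̄ _ _ hu₀ hv₀).1 hne
      simp [hvv₀]
    · simp [hf u hu hu₀ hne]
  obtain ⟨N, hN⟩ := hrad
  have hfN : f ^ N ∈ maxSat (Ideal.span S) := hstrip N _ (by rw [← mul_pow]; exact le_maxSat hN)
  exact pow_ne_zero N hfv (by simpa using mem_zeroLocus_maxSat hv hv₀ _ hfN)

end ProjZerosBar

section HomogenizedSystem

open Projectivization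

variable {K : Type*} [Field K] {n : ℕ} {S : Set (MvPolynomial (Fin n) K)}

local notation "K̄" => AlgebraicClosure K

theorem isHomogeneous_of_mem_homogPoly_image :
    ∀ g ∈ homogPoly '' S, ∃ D, g.IsHomogeneous D := by
  rintro _ ⟨f, -, rfl⟩
  exact ⟨_, isHomogeneous_homogPoly f⟩

variable {L : Type*} [Field L] [Algebra K L] {w : Fin n → L}

theorem cons_zero_mem_zeroLocus_homogPoly_iff :
    (Fin.cons 0 w : Fin (n + 1) → L) ∈ zeroLocus L (Ideal.span (homogPoly '' S)) ↔
      w ∈ zeroLocus L (Ideal.span (topComp '' S)) := by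
  simp [zeroLocus_span, aeval_cons_zero_homogPoly]

theorem cons_one_mem_zeroLocus_homogPoly_iff :
    (Fin.cons 1 w : Fin (n + 1) → L) ∈ zeroLocus L (Ideal.span (homogPoly '' S)) ↔
      w ∈ zeroLocus L (Ideal.span S) := by
  simp [zeroLocus_span, aeval_cons_one_homogPoly]

theorem rename_mem_sup_of_mem_span_topComp {g : MvPolynomial (Fin n) K}
    (hg : g ∈ Ideal.span (topComp '' S)) :
    rename Fin.succ g ∈ Ideal.span (homogPoly '' S) ⊔ Ideal.span {X 0} := by
  have hle : Ideal.span (topComp '' S) ≤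
      (Ideal.span (homogPoly '' S) ⊔ Ideal.span {X 0}).comap (rename Fin.succ) := by
    rw [Ideal.span_le]
    rintro _ ⟨f, hf, rfl⟩
    rw [SetLike.mem_coe, Ideal.mem_comap, ← sub_sub_cancel (homogPoly f) (rename _ _)]
    exact sub_mem (Ideal.mem_sup_left (Ideal.subset_span ⟨f, hf, rfl⟩))
      (Ideal.mem_sup_right (homogPoly_sub_rename_topComp_mem f))
  exact hle hg

theorem idealOfVars_pow_le_span_homogPoly_sup {d : ℕ}
    (hd : ∀ f : MvPolynomial (Fin n) K, f.IsHomogeneous d → f ∈ Ideal.span (topComp '' S)) :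
    idealOfVars (Fin (n + 1)) K ^ d ≤ Ideal.span (homogPoly '' S) ⊔ Ideal.span {X 0} := by
  rw [pow_idealOfVars_eq_span, Ideal.span_le]
  rintro _ ⟨a, ha, rfl⟩
  set p : MvPolynomial (Fin (n + 1)) K := monomial a 1
  have hX : ∀ i, ((Fin.cons 0 X : Fin (n + 1) → MvPolynomial (Fin n) K) i).IsHomogeneous 1 :=
    Fin.cases (isHomogeneous_zero _ _ _) (isHomogeneous_X K)
  have hp := (isHomogeneous_monomial (1 : K) ha).aeval _ hX
  rw [one_mul] at hp
  change p ∈ _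
  rw [← sub_add_cancel p (rename Fin.succ (aeval (Fin.cons 0 X) p))]
  exact add_mem (Ideal.mem_sup_right (sub_rename_aeval_cons_zero_mem p))
    (rename_mem_sup_of_mem_span_topComp (hd _ hp))

theorem finite_projZerosBar_homogPoly (hinf : zeroLocus K̄ (Ideal.span (topComp '' S)) ⊆ {0})
    (hfin : (zeroLocus K̄ (Ideal.span S)).Finite) :
    (projZerosBar (Ideal.span (homogPoly '' S))).Finite := by
  refine (hfin.image fun w => mk K̄ (Fin.cons 1 w : Fin (n + 1) → K̄)
    fun h => by simpa using congrFun h 0).subset fun x hx => ?_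
  rw [mem_projZerosBar_iff] at hx
  have h0 : x.rep 0 ≠ 0 := by
    intro h0
    have hcons : Fin.cons 0 (Fin.tail x.rep) = x.rep := by rw [← h0]; exact Fin.cons_self_tail _
    rw [← hcons] at hx
    apply x.rep_nonzero
    rw [← hcons, Set.mem_singleton_iff.1 (hinf (cons_zero_mem_zeroLocus_homogPoly_iff.1 hx))]
    exact funext (Fin.cases rfl fun _ => rfl)
  set w := (x.rep 0)⁻¹ • Fin.tail x.rep
  have hw : (Fin.cons 1 w : Fin (n + 1) → K̄) = (x.rep 0)⁻¹ • x.rep := by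
    funext j
    cases j using Fin.cases <;> simp [w, h0, Fin.tail]
  refine ⟨w, cons_one_mem_zeroLocus_homogPoly_iff.1 ?_, ?_⟩
  · rw [hw]
    exact smul_mem_zeroLocus_span isHomogeneous_of_mem_homogPoly_image hx _
  · conv_rhs => rw [← x.mk_rep]
    exact (mk_eq_mk_iff' K̄ _ _ _ _).2 ⟨(x.rep 0)⁻¹, hw.symm⟩

theorem genCoords_homogPoly (hfin : (zeroLocus K̄ (Ideal.span S)).Finite) {d : ℕ}
    (hd : ∀ f : MvPolynomial (Fin n) K, f.IsHomogeneous d → f ∈ Ideal.span (topComp '' S)) :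
    GenCoords 0 (Ideal.span (homogPoly '' S)) :=
  ⟨finite_projZerosBar_homogPoly (zeroLocus_subset_zero_iff.2 ⟨d, hd⟩) hfin,
    Or.inr fun _ => mem_maxSat_of_X_mul_mem (idealOfVars_pow_le_span_homogPoly_sup hd)⟩

end HomogenizedSystem

theorem stmt_4_general {K : Type*} [Field K] [IsAlgClosed K] {n m : ℕ}
    (F : Fin m → MvPolynomial (Fin n) K)
    (hdim : ringKrullDim (MvPolynomial (Fin n) K ⧸ Ideal.span (Set.range F)) = 0) :
    GenCoords (0 : Fin (n + 1)) (Ideal.span (homogPoly '' Set.range F)) ↔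
      ∃ d : ℕ, ∀ f : MvPolynomial (Fin n) K, f.IsHomogeneous d →
        f ∈ Ideal.span (topComp '' Set.range F) := by
  constructor
  · refine fun h => zeroLocus_subset_zero_iff (L := AlgebraicClosure K).1 fun w hw => ?_
    by_contra hw₀
    have hv₀ : (Fin.cons 0 w : Fin (n + 1) → AlgebraicClosure K) ≠ 0 :=
      fun h0 => hw₀ (funext fun j => by simpa using congrFun h0 j.succ)
    exact h.apply_ne_zero isHomogeneous_of_mem_homogPoly_image
      (cons_zero_mem_zeroLocus_homogPoly_iff.2 hw) hv₀ (Fin.cons_zero _ _)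
  · rintro ⟨d, hd⟩
    exact genCoords_homogPoly (finite_zeroLocus_of_ringKrullDim_nonpos
      IsAlgClosed.algebraMap_bijective_of_isIntegral.2 hdim.le) hd

/-- For an algebraically closed field `K` and a polynomial system `F` with
`(F) ≠ (1)` zero-dimensional, `(F^h)` is in generic coordinates iff the degree of regularity
is finite, i.e. iff some degree-`d` part of the polynomial ring is contained in `(F^top)`. -/
theorem stmt_4 {K : Type*} [Field K] [IsAlgClosed K] {n m : ℕ}
    (F : Fin m → MvPolynomial (Fin n) K)
    (hne : Ideal.span (Set.range F) ≠ ⊤)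
    (hdim : ringKrullDim (MvPolynomial (Fin n) K ⧸ Ideal.span (Set.range F)) = 0) :
    GenCoords (0 : Fin (n + 1)) (Ideal.span (homogPoly '' Set.range F)) ↔
      ∃ d : ℕ, ∀ f : MvPolynomial (Fin n) K, f.IsHomogeneous d →
        f ∈ Ideal.span (topComp '' Set.range F) :=
  stmt_4_general F hdim
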